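/- arXiv:1801.01329 — 6 statements merged into one kernel-verified Lean document; each statement's English description precedes it below -/
import Mathlib

section
/- If a topological group G admits an unbounded lower semi-continuous invariant length function, then G fails topological bounded normal generation: there exists a non-trivial g ∈ G such that for every n ∈ ℕ the closure of (g^{±G})^{·n} is not all of G. -/
/-!
Every element of `g^{±G}` has length `l g`, so by subadditivity every element of
`(g^{±G})^{·n}` has length at most `n * l g`, and by lower semicontinuity so does every element
of its closure. For `g` with `0 < l g < ∞` this bound is finite, hence exceeded somewhere since
`l` is unbounded.
-/

open Pointwise ENNReal

/-- The set `g^{±G}`. -/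
def pmConj {G : Type*} [Group G] (g : G) : Set G :=
  {x | ∃ h : G, x = h * g * h⁻¹} ∪ {x | ∃ h : G, x = h * g⁻¹ * h⁻¹}

theorem length_le_of_mem_closure {X : Type*} [TopologicalSpace X] {l : X → ℝ≥0∞}
    (h_lsc : ∀ r : NNReal, IsClosed {x : X | l x ≤ (r : ℝ≥0∞)})
    {S : Set X} {c : ℝ≥0∞} (hc : c ≠ ⊤) (hS : ∀ x ∈ S, l x ≤ c) :
    ∀ x ∈ closure S, l x ≤ c := by
  lift c to NNReal using hc
  exact closure_minimal hS (h_lsc c)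

section LengthFunction

variable {G : Type*} [Group G] {l : G → ℝ≥0∞}

theorem length_eq_of_mem_pmConj (h_inv : ∀ g : G, l g⁻¹ = l g)
    (h_conj : ∀ g h : G, l (g * h * g⁻¹) = l h) {g x : G} (hx : x ∈ pmConj g) : l x = l g := by
  rcases hx with ⟨h, rfl⟩ | ⟨h, rfl⟩
  · exact h_conj h g
  · rw [h_conj h g⁻¹, h_inv]

theorem length_le_of_mem_pow (h_one : l 1 = 0) (h_mul : ∀ g h : G, l (g * h) ≤ l g + l h)
    {S : Set G} {c : ℝ≥0∞} (hS : ∀ x ∈ S, l x ≤ c) :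
    ∀ n : ℕ, ∀ x ∈ S ^ n, l x ≤ n * c
  | 0, x, hx => by
    rw [pow_zero, Set.mem_one] at hx
    simp [hx, h_one]
  | n + 1, _, ⟨a, ha, b, hb, rfl⟩ =>
    calc l (a * b) ≤ l a + l b := h_mul a b
      _ ≤ n * c + c := add_le_add (length_le_of_mem_pow h_one h_mul hS n a ha) (hS b hb)
      _ = (n + 1 : ℕ) * c := by push_cast; ring

end LengthFunction

theorem stmt_3_general {G : Type*} [Group G] [TopologicalSpace G]
    (l : G → ℝ≥0∞)
    (h_one : l 1 = 0)
    (h_inv : ∀ g : G, l g⁻¹ = l g)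
    (h_mul : ∀ g h : G, l (g * h) ≤ l g + l h)
    (h_conj : ∀ g h : G, l (g * h * g⁻¹) = l h)
    (h_lsc : ∀ r : NNReal, IsClosed {g : G | l g ≤ (r : ℝ≥0∞)})
    (h_unbounded : ∀ K : ℕ, ∃ g : G, (K : ℝ≥0∞) < l g ∧ l g < ⊤) :
    ∃ g : G, g ≠ 1 ∧ ∀ n : ℕ, 1 ≤ n → closure (pmConj g ^ n) ≠ (Set.univ : Set G) := by
  obtain ⟨g, hg_pos, hg_fin⟩ := h_unbounded 0
  refine ⟨g, fun hg => by simp [hg, h_one] at hg_pos, fun n _ hn => ?_⟩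
  have hbound_fin : (n : ℝ≥0∞) * l g ≠ ⊤ := mul_ne_top (natCast_ne_top n) hg_fin.ne
  have hbound : ∀ x ∈ closure (pmConj g ^ n), l x ≤ n * l g :=
    length_le_of_mem_closure h_lsc hbound_fin <| length_le_of_mem_pow h_one h_mul
      (fun x hx => (length_eq_of_mem_pmConj h_inv h_conj hx).le) n
  obtain ⟨K, hK⟩ := ENNReal.exists_nat_gt hbound_fin
  obtain ⟨y, hy, -⟩ := h_unbounded K
  exact (hbound y (hn ▸ Set.mem_univ y)).not_gt (hK.trans hy)

/-- A topological group admitting an unbounded lower semi-continuous invariant length function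
fails topological bounded normal generation. -/
theorem stmt_3 {G : Type*} [Group G] [TopologicalSpace G] [IsTopologicalGroup G]
    (l : G → ℝ≥0∞)
    (h_one : l 1 = 0)
    (h_inv : ∀ g : G, l g⁻¹ = l g)
    (h_mul : ∀ g h : G, l (g * h) ≤ l g + l h)
    (h_conj : ∀ g h : G, l (g * h * g⁻¹) = l h)
    (h_lsc : ∀ r : NNReal, IsClosed {g : G | l g ≤ (r : ℝ≥0∞)})
    (h_unbounded : ∀ K : ℕ, ∃ g : G, (K : ℝ≥0∞) < l g ∧ l g < ⊤) :
    ∃ g : G, g ≠ 1 ∧ ∀ n : ℕ, 1 ≤ n → closure (pmConj g ^ n) ≠ (Set.univ : Set G) :=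
  stmt_3_general l h_one h_inv h_mul h_conj h_lsc h_unbounded
end

section
/- Let X be an infinite set. Then the symmetric group Sym(X) of all permutations of X, endowed with the topology of pointwise convergence (the subspace topology induced by the inclusion Sym(X) ⊆ X^X, where X carries the discrete topology), fails topological bounded normal generation: there exists a non-trivial g ∈ Sym(X) such that for every n ∈ ℕ the closure of (g^{±Sym(X)})^{·n} is not all of Sym(X). -/
open Pointwise

/-! A product of `n` conjugates of `g^{±1}` moves at most `n` times as many points as `g`, and in
the topology of pointwise convergence the permutations moving at most `k` points form a closed
set. For a transposition `g` the closure of `(g^{±G})^{·n}` therefore consists of permutations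
moving at most `2n` points, while an infinite set carries permutations moving infinitely many. -/

open MulAction Equiv

theorem encard_compl_fixedBy_mul_le {M α : Type*} [Monoid M] [MulAction M α] (g h : M) :
    (fixedBy α (g * h))ᶜ.encard ≤ (fixedBy α g)ᶜ.encard + (fixedBy α h)ᶜ.encard := by
  refine le_trans (Set.encard_le_encard ?_) (Set.encard_union_le _ _)
  rw [← Set.compl_inter, Set.compl_subset_compl]
  exact fixedBy_mul α g h

section MovedPoints

variable {G α : Type*} [Group G] [MulAction G α]

theorem encard_compl_fixedBy_of_mem_pmConj {g σ : G} (hσ : σ ∈ pmConj g) :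
    (fixedBy α σ)ᶜ.encard = (fixedBy α g)ᶜ.encard := by
  rcases hσ with ⟨h, rfl⟩ | ⟨h, rfl⟩
  all_goals
    rw [← smul_fixedBy, ← Set.smul_set_compl, Set.encard_smul_set]
  rw [fixedBy_inv]

theorem encard_compl_fixedBy_of_mem_pmConj_pow {g σ : G} {n : ℕ} (hσ : σ ∈ pmConj g ^ n) :
    (fixedBy α σ)ᶜ.encard ≤ n * (fixedBy α g)ᶜ.encard := by
  induction n generalizing σ with
  | zero =>
    rw [pow_zero, Set.mem_one] at hσ
    simp [hσ]
  | succ n ih =>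
    obtain ⟨τ, hτ, ρ, hρ, rfl⟩ := Set.mem_mul.mp (pow_succ (pmConj g) n ▸ hσ)
    calc (fixedBy α (τ * ρ))ᶜ.encard
        ≤ (fixedBy α τ)ᶜ.encard + (fixedBy α ρ)ᶜ.encard :=
          encard_compl_fixedBy_mul_le τ ρ
      _ ≤ n * (fixedBy α g)ᶜ.encard + (fixedBy α g)ᶜ.encard :=
          add_le_add (ih hτ) (encard_compl_fixedBy_of_mem_pmConj hρ).le
      _ = (n + 1 : ℕ) * (fixedBy α g)ᶜ.encard := by push_cast; ring

end MovedPoints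

theorem isClosed_setOf_encard_compl_fixedBy_le {X : Type*} [TopologicalSpace X]
    [DiscreteTopology X] [TopologicalSpace (Perm X)]
    (hcont : ∀ x : X, Continuous fun σ : Perm X => σ x) (k : ℕ∞) :
    IsClosed {σ : Perm X | (fixedBy X σ)ᶜ.encard ≤ k} := by
  refine isOpen_compl_iff.mp (isOpen_iff_forall_mem_open.mpr fun σ hσ => ?_)
  have hk : k < (fixedBy X σ)ᶜ.encard := not_le.mp hσ
  have hk_top : k ≠ ⊤ := hk.ne_top
  obtain ⟨t, hts, ht⟩ := Set.exists_subset_encard_eq (Order.add_one_le_of_lt hk)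
  have ht_fin : t.Finite :=
    Set.encard_ne_top_iff.mp (ht ▸ WithTop.add_ne_top.mpr ⟨hk_top, ENat.one_ne_top⟩)
  refine ⟨⋂ x ∈ t, {τ | τ x = σ x}, fun τ hτ => ?_,
    ht_fin.isOpen_biInter fun x _ => isOpen_discrete {σ x} |>.preimage (hcont x), ?_⟩
  · have hmoved : t ⊆ (fixedBy X τ)ᶜ := fun x hx => by
      have := hts hx
      simp only [Set.mem_iInter, Set.mem_ofPred_eq] at hτ
      simpa [hτ x hx] using this
    simp only [Set.mem_compl_iff, Set.mem_ofPred_eq, not_le]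
    exact ((ENat.lt_add_one_iff hk_top).mpr le_rfl).trans_le (ht ▸ Set.encard_le_encard hmoved)
  · simp

theorem exists_perm_infinite_compl_fixedBy (X : Type*) [Infinite X] :
    ∃ σ : Perm X, (fixedBy X σ)ᶜ.Infinite := by
  let f : ℤ ↪ X := Equiv.intEquivNat.toEmbedding.trans (Infinite.natEmbedding X)
  refine ⟨(Equiv.addRight (1 : ℤ)).viaEmbedding f,
    (Set.infinite_range_of_injective f.injective).mono ?_⟩
  rintro _ ⟨m, rfl⟩
  simp [Perm.viaEmbedding_apply]

/-- The symmetric group of an infinite set, endowed with the topology of pointwise convergence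
(induced from `X → X` with `X` discrete), fails topological bounded normal generation. -/
theorem stmt_5 {X : Type*} [Infinite X] :
    letI : TopologicalSpace X := ⊥
    letI : TopologicalSpace (Equiv.Perm X) :=
      TopologicalSpace.induced (fun g : Equiv.Perm X => (g : X → X)) Pi.topologicalSpace
    ∃ g : Equiv.Perm X, g ≠ 1 ∧
      ∀ n : ℕ, 1 ≤ n → closure (pmConj g ^ n) ≠ (Set.univ : Set (Equiv.Perm X)) := by
  let : TopologicalSpace X := ⊥
  have : DiscreteTopology X := ⟨rfl⟩
  let : TopologicalSpace (Perm X) :=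
    TopologicalSpace.induced (fun g : Perm X => (g : X → X)) Pi.topologicalSpace
  classical
  obtain ⟨a, b, hab⟩ := exists_pair_ne X
  have hswap : (fixedBy X (swap a b))ᶜ.encard ≤ 2 :=
    (Set.encard_le_encard fun x hx => by simp_all [swap_apply_ne_self_iff]).trans
      (Set.encard_pair hab).le
  refine ⟨swap a b, swap_eq_one_iff.not.mpr hab, fun n _ hclosure => ?_⟩
  have hclosed := isClosed_setOf_encard_compl_fixedBy_le (X := X)
    (fun x => (continuous_apply x).comp continuous_induced_dom) (n * 2)
  have hsub :
      closure (pmConj (swap a b) ^ n) ⊆ {σ : Perm X | (fixedBy X σ)ᶜ.encard ≤ n * 2} :=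
    closure_minimal (fun σ hσ => (encard_compl_fixedBy_of_mem_pmConj_pow hσ).trans
      (mul_le_mul_right hswap _)) hclosed
  obtain ⟨σ, hσ⟩ := exists_perm_infinite_compl_fixedBy X
  have := hsub (hclosure ▸ Set.mem_univ σ)
  rw [Set.mem_ofPred_eq, Set.encard_eq_top hσ, top_le_iff] at this
  exact ENat.natCast_ne_top (n * 2) (mod_cast this)
end

section
/- Let H be an infinite-dimensional separable complex Hilbert space, let U(H) be the group of unitary operators on H endowed with the strong operator topology (the topology of pointwise convergence on H), and let PU(H) be the projective unitary group, i.e. the quotient of U(H) by its center (the subgroup of unitary scalar multiples of the identity), endowed with the quotient topology. Then PU(H) fails topological bounded normal generation: there exists a non-trivial g ∈ PU(H) such that for every n ∈ ℕ the closure of (g^{±PU(H)})^{·n} is not all of PU(H). -/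
/-!
Let `u` be the reflection in the hyperplane orthogonal to a unit vector, so that `u - 1` has rank
one. Then every product of `n` conjugates of `u` and `u⁻¹` differs from `1` by an operator of rank
at most `n`. The unitaries that differ from some unimodular scalar by an operator of rank at most
`n` form a closed set in the strong operator topology: rank at most `n` is cut out by vanishing
Gram determinants, and the circle of scalars is compact. This set is invariant under the centre,
which consists of the unimodular scalars since the unitaries span all operators, so its image in
`PU(H)` is closed. It misses the class of the reflection `v` in a subspace of infinite dimension
and codimension, because `v - μ` has infinite rank for every scalar `μ`.
-/

open Pointwise

namespace Module.End

variable {K V : Type*} [DivisionRing K] [AddCommGroup V] [Module K V]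

theorem rank_mul_le_left (a b : Module.End K V) : (a * b).rank ≤ a.rank :=
  LinearMap.rank_comp_le_left b a

theorem rank_mul_le_right (a b : Module.End K V) : (a * b).rank ≤ b.rank :=
  LinearMap.rank_comp_le_right b a

theorem rank_mul_sub_one_le (a b : Module.End K V) :
    (a * b - 1).rank ≤ (a - 1).rank + (b - 1).rank := by
  rw [show a * b - 1 = (a - 1) + a * (b - 1) by rw [mul_sub, mul_one]; abel]
  calc ((a - 1) + a * (b - 1)).rank ≤ (a - 1).rank + (a * (b - 1)).rank :=
        LinearMap.rank_add_le _ _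
    _ ≤ (a - 1).rank + (b - 1).rank := by gcongr; exact rank_mul_le_right _ _

theorem rank_conj_sub_one_le {a b : Module.End K V} (hab : a * b = 1) (u : Module.End K V) :
    (a * u * b - 1).rank ≤ (u - 1).rank := by
  rw [show a * u * b - 1 = a * (u - 1) * b by rw [mul_sub, sub_mul, mul_one, hab]]
  exact (rank_mul_le_left _ _).trans (rank_mul_le_right _ _)

theorem rank_inv_sub_one_le {a b : Module.End K V} (hba : b * a = 1) :
    (b - 1).rank ≤ (a - 1).rank := by
  rw [show b - 1 = -(b * (a - 1)) by rw [mul_sub, hba, mul_one, neg_sub],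
    LinearMap.rank, LinearMap.range_neg]
  exact rank_mul_le_right _ _

end Module.End

theorem LinearMap.rank_le_natCast_iff {K V V' : Type*} [DivisionRing K] [AddCommGroup V]
    [Module K V] [AddCommGroup V'] [Module K V'] (f : V →ₗ[K] V') (n : ℕ) :
    f.rank ≤ n ↔ ∀ e : Fin (n + 1) → V, ¬ LinearIndependent K (f ∘ e) := by
  rw [← not_iff_not, not_le, ← Order.succ_le_iff, Cardinal.succ_natCast, ← Nat.cast_add_one,
    natCast_le_rank_iff]
  push Not
  constructor
  · rintro ⟨g, hg⟩
    choose e he using fun i => LinearMap.mem_range.mp (g i).2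
    have hfe : f ∘ e = (LinearMap.range f).subtype ∘ g := funext he
    exact ⟨e, hfe ▸ hg.map' _ (Submodule.ker_subtype _)⟩
  · rintro ⟨e, he⟩
    exact ⟨f.rangeRestrict ∘ e, .of_comp (LinearMap.range f).subtype he⟩

theorem isClosed_setOf_rank_le {X 𝕜 V E : Type*} [TopologicalSpace X] [RCLike 𝕜]
    [AddCommGroup V] [Module 𝕜 V] [NormedAddCommGroup E] [InnerProductSpace 𝕜 E]
    (F : X → V →ₗ[𝕜] E) (hF : ∀ v, Continuous fun x => F x v) (n : ℕ) :
    IsClosed {x | (F x).rank ≤ n} := by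
  have hdet : {x | (F x).rank ≤ n} =
      ⋂ e : Fin (n + 1) → V, {x | (Matrix.gram 𝕜 (F x ∘ e)).det = 0} := by
    ext x
    simp [LinearMap.rank_le_natCast_iff, ← Matrix.det_gram_ne_zero_iff_linearIndependent]
  rw [hdet]
  exact isClosed_iInter fun e => isClosed_eq
    (Continuous.matrix_det <| continuous_matrix fun i j => (hF _).inner (hF _)) continuous_const

section GroupRepresentation

variable {G K V : Type*} [Group G] [DivisionRing K] [AddCommGroup V] [Module K V]

theorem rank_sub_one_le_of_mem_pmConj (φ : G →* Module.End K V) {g t : G} (ht : t ∈ pmConj g) :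
    (φ t - 1).rank ≤ (φ g - 1).rank := by
  have hφ (h : G) : φ h * φ h⁻¹ = 1 := by rw [← map_mul, mul_inv_cancel, map_one]
  rcases ht with ⟨h, rfl⟩ | ⟨h, rfl⟩
  · rw [map_mul, map_mul]
    exact Module.End.rank_conj_sub_one_le (hφ h) _
  · rw [map_mul, map_mul]
    exact (Module.End.rank_conj_sub_one_le (hφ h) _).trans
      (Module.End.rank_inv_sub_one_le (by rw [← map_mul, inv_mul_cancel, map_one]))

theorem rank_sub_one_le_of_mem_pmConj_pow (φ : G →* Module.End K V) {g : G} (n : ℕ) {t : G}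
    (ht : t ∈ pmConj g ^ n) : (φ t - 1).rank ≤ n * (φ g - 1).rank := by
  induction n generalizing t with
  | zero =>
    rw [pow_zero, Set.mem_one] at ht
    simp [ht]
  | succ n ih =>
    obtain ⟨p, hp, q, hq, rfl⟩ := Set.mem_mul.mp (pow_succ (pmConj g) n ▸ ht)
    calc (φ (p * q) - 1).rank ≤ (φ p - 1).rank + (φ q - 1).rank := by
          rw [map_mul]; exact Module.End.rank_mul_sub_one_le _ _
      _ ≤ n * (φ g - 1).rank + (φ g - 1).rank :=
          add_le_add (ih hp) (rank_sub_one_le_of_mem_pmConj φ hq)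
      _ = (n + 1 : ℕ) * (φ g - 1).rank := by push_cast; ring

end GroupRepresentation

theorem pmConj_subset_image {G G' : Type*} [Group G] [Group G'] (f : G →* G')
    (hf : Function.Surjective f) (g : G) : pmConj (f g) ⊆ f '' pmConj g := by
  rintro _ (⟨h', rfl⟩ | ⟨h', rfl⟩) <;> obtain ⟨h, rfl⟩ := hf h'
  · exact ⟨h * g * h⁻¹, Or.inl ⟨h, rfl⟩, by simp⟩
  · exact ⟨h * g⁻¹ * h⁻¹, Or.inr ⟨h, rfl⟩, by simp⟩

theorem pmConj_pow_subset_image {G G' : Type*} [Group G] [Group G'] (f : G →* G')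
    (hf : Function.Surjective f) (g : G) (n : ℕ) : pmConj (f g) ^ n ⊆ f '' (pmConj g ^ n) := by
  rw [Set.image_pow]
  exact Set.pow_subset_pow_left (pmConj_subset_image f hf g)

theorem exists_algebraMap_eq_of_mem_center_unitary {A : Type*} [CStarAlgebra A]
    [Algebra.IsCentral ℂ A] {z : unitary A} (hz : z ∈ Subgroup.center (unitary A)) :
    ∃ c ∈ unitary ℂ, (z : A) = algebraMap ℂ A c := by
  have hcomm : (z : A) ∈ Subalgebra.center ℂ A := by
    rw [Subalgebra.mem_center_iff]
    intro b
    induction (CStarAlgebra.span_unitary A).ge (Submodule.mem_top : b ∈ ⊤) using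
      Submodule.span_induction with
    | mem w hw => exact congrArg Subtype.val (Subgroup.mem_center_iff.mp hz ⟨w, hw⟩)
    | zero => simp
    | add x y _ _ hx hy => rw [add_mul, mul_add, hx, hy]
    | smul a x _ hx => rw [smul_mul_assoc, mul_smul_comm, hx]
  obtain ⟨c, hc⟩ := (Algebra.IsCentral.mem_center_iff ℂ).mp hcomm
  cases subsingleton_or_nontrivial A
  · exact ⟨1, one_mem _, Subsingleton.elim _ _⟩
  refine ⟨c, ?_, hc⟩
  rw [Unitary.mem_iff_star_mul_self]
  apply (algebraMap ℂ A).injective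
  rw [map_mul, algebraMap_star_comm, ← hc, map_one, Unitary.coe_star_mul_self]

theorem Orthonormal.mem_orthogonal_span_image {ι 𝕜 E : Type*} [RCLike 𝕜] [NormedAddCommGroup E]
    [InnerProductSpace 𝕜 E] {f : ι → E} (hf : Orthonormal 𝕜 f) {T : Set ι} {k : ι} (hk : k ∉ T) :
    f k ∈ (Submodule.span 𝕜 (f '' T))ᗮ := by
  refine Submodule.isOrtho_iff_le.mp ?_ (Submodule.mem_span_singleton_self (f k))
  refine Submodule.isOrtho_span.mpr ?_
  rintro _ rfl _ ⟨j, hj, rfl⟩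
  exact hf.inner_eq_zero (by rintro rfl; exact hk hj)

theorem exists_orthonormal_nat {𝕜 E : Type*} [RCLike 𝕜] [NormedAddCommGroup E]
    [InnerProductSpace 𝕜 E] (h : ¬ FiniteDimensional 𝕜 E) : ∃ f : ℕ → E, Orthonormal 𝕜 f := by
  let b := Module.Basis.ofVectorSpace 𝕜 E
  have : Infinite (Module.Basis.ofVectorSpaceIndex 𝕜 E) :=
    not_finite_iff_infinite.mp fun _ => h (Module.Finite.of_basis b)
  exact ⟨_, InnerProductSpace.gramSchmidtNormed_orthonormal
    (b.linearIndependent.comp _ (Infinite.natEmbedding _).injective)⟩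

section UnitaryGroup

variable {H : Type*} [NormedAddCommGroup H] [InnerProductSpace ℂ H] [CompleteSpace H]

local notation "U(" H ")" => unitary (H →L[ℂ] H)
local notation "PU(" H ")" => unitary (H →L[ℂ] H) ⧸ Subgroup.center (unitary (H →L[ℂ] H))

abbrev unitaryStrongTopology : TopologicalSpace U(H) :=
  TopologicalSpace.induced (fun u : U(H) => ((u : H →L[ℂ] H) : H → H)) Pi.topologicalSpace

attribute [local instance] unitaryStrongTopology

noncomputable def unitaryToEnd : U(H) →* Module.End ℂ H :=
  ContinuousLinearMap.toLinearMapRingHom.toMonoidHom.comp (unitary (H →L[ℂ] H)).subtype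

@[simp] theorem unitaryToEnd_apply (u : U(H)) (x : H) : unitaryToEnd u x = (u : H →L[ℂ] H) x :=
  rfl

def scalarAddRankLE (n : ℕ) : Set U(H) :=
  {w | ∃ μ ∈ Metric.sphere (0 : ℂ) 1, (unitaryToEnd w - μ • 1).rank ≤ n}

theorem isClosed_scalarAddRankLE (n : ℕ) : IsClosed (scalarAddRankLE (H := H) n) := by
  let F : U(H) × Metric.sphere (0 : ℂ) 1 → Module.End ℂ H :=
    fun p => unitaryToEnd p.1 - (p.2 : ℂ) • 1
  have hcoe : Continuous fun w : U(H) => ((w : H →L[ℂ] H) : H → H) := continuous_induced_dom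
  have hF (x : H) : Continuous fun p => F p x :=
    ((continuous_apply x).comp (hcoe.comp continuous_fst)).sub
      ((continuous_subtype_val.comp continuous_snd).smul continuous_const)
  have hS : scalarAddRankLE n = Prod.fst '' {p | (F p).rank ≤ n} := by
    ext w
    constructor
    · rintro ⟨μ, hμ, hw⟩
      exact ⟨(w, ⟨μ, hμ⟩), hw, rfl⟩
    · rintro ⟨⟨w, μ⟩, hw, rfl⟩
      exact ⟨μ, μ.2, hw⟩
  rw [hS]
  exact isClosedMap_fst_of_compactSpace _ (isClosed_setOf_rank_le F hF n)

theorem pmConj_pow_subset_scalarAddRankLE {u : U(H)}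
    (hu : (unitaryToEnd u - 1).rank ≤ 1) (n : ℕ) :
    pmConj u ^ n ⊆ scalarAddRankLE n := by
  intro t ht
  refine ⟨1, by simp, ?_⟩
  rw [one_smul]
  calc _ ≤ n * (unitaryToEnd u - 1).rank := rank_sub_one_le_of_mem_pmConj_pow _ n ht
    _ ≤ n * 1 := by gcongr
    _ = n := mul_one _

theorem notMem_scalarAddRankLE_of_eigenvectors {n : ℕ} {v : U(H)} {α β : ℂ} (hαβ : α ≠ β)
    {e e' : Fin (n + 1) → H} (he : LinearIndependent ℂ e) (he' : LinearIndependent ℂ e')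
    (hve : ∀ i, (v : H →L[ℂ] H) (e i) = α • e i) (hve' : ∀ i, (v : H →L[ℂ] H) (e' i) = β • e' i) :
    v ∉ scalarAddRankLE n := by
  rintro ⟨μ, -, hμ⟩
  rw [LinearMap.rank_le_natCast_iff] at hμ
  have key {γ : ℂ} (hγ : γ ≠ μ) {e : Fin (n + 1) → H} (he : LinearIndependent ℂ e)
      (hve : ∀ i, (v : H →L[ℂ] H) (e i) = γ • e i) : False := by
    have hsmul : ⇑(unitaryToEnd v - μ • 1) ∘ e =
        (fun _ : Fin (n + 1) => Units.mk0 (γ - μ) (sub_ne_zero.mpr hγ)) • e := by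
      ext i
      simp [hve, sub_smul, Units.smul_def]
    exact hμ e (hsmul ▸ he.units_smul _)
  by_cases hαμ : α = μ
  · exact key (hαμ ▸ hαβ.symm) he' hve'
  · exact key hαμ he hve

theorem mul_mem_scalarAddRankLE {n : ℕ} {w z : U(H)} (hw : w ∈ scalarAddRankLE n)
    (hz : z ∈ Subgroup.center U(H)) : w * z ∈ scalarAddRankLE n := by
  obtain ⟨μ, hμ, hw⟩ := hw
  obtain ⟨c, hc, hz⟩ := exists_algebraMap_eq_of_mem_center_unitary hz
  have hc1 : ‖c‖ = 1 := CStarRing.norm_of_mem_unitary hc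
  refine ⟨c * μ, by simp [hc1, mem_sphere_zero_iff_norm.mp hμ], ?_⟩
  have : unitaryToEnd (w * z) - (c * μ) • 1 = c • (unitaryToEnd w - μ • 1) := by
    ext x
    simp [hz, Algebra.algebraMap_eq_smul_one, smul_sub, smul_smul, mul_comm c]
  rw [this, LinearMap.rank, LinearMap.range_smul _ _ (by rintro rfl; simp at hc1)]
  exact hw

theorem preimage_image_mk_scalarAddRankLE (n : ℕ) :
    (QuotientGroup.mk : U(H) → PU(H)) ⁻¹' (QuotientGroup.mk '' scalarAddRankLE n) =
      scalarAddRankLE n := by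
  rw [QuotientGroup.preimage_image_mk_eq_mul]
  refine subset_antisymm ?_ (Set.subset_mul_left _ (one_mem _))
  rintro _ ⟨w, hw, z, hz, rfl⟩
  exact mul_mem_scalarAddRankLE hw hz

theorem isClosed_image_mk_scalarAddRankLE (n : ℕ) :
    IsClosed ((QuotientGroup.mk : U(H) → PU(H)) '' scalarAddRankLE n) := by
  rw [← (QuotientGroup.isQuotientMap_mk _).isClosed_preimage, preimage_image_mk_scalarAddRankLE]
  exact isClosed_scalarAddRankLE n

theorem notMem_center_of_eigenvectors {u : U(H)} {α β : ℂ} (hαβ : α ≠ β) {x y : H}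
    (hx0 : x ≠ 0) (hy0 : y ≠ 0) (hx : (u : H →L[ℂ] H) x = α • x)
    (hy : (u : H →L[ℂ] H) y = β • y) : u ∉ Subgroup.center U(H) := by
  intro hu
  obtain ⟨c, -, hc⟩ := exists_algebraMap_eq_of_mem_center_unitary hu
  rw [hc, Algebra.algebraMap_eq_smul_one] at hx hy
  exact hαβ ((smul_left_injective ℂ hx0 hx).symm.trans (smul_left_injective ℂ hy0 hy))

noncomputable def reflectionUnitary (K : Submodule ℂ H) [K.HasOrthogonalProjection] : U(H) :=
  Unitary.linearIsometryEquiv.symm K.reflection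

@[simp] theorem reflectionUnitary_apply (K : Submodule ℂ H) [K.HasOrthogonalProjection] (x : H) :
    ((reflectionUnitary K : U(H)) : H →L[ℂ] H) x = K.reflection x := rfl

theorem rank_reflectionUnitary_sub_one_le (K : Submodule ℂ H) [K.HasOrthogonalProjection] :
    (unitaryToEnd (reflectionUnitary K) - 1).rank ≤ Module.rank ℂ Kᗮ := by
  refine Submodule.rank_mono ?_
  rintro _ ⟨x, rfl⟩
  have : K.reflection x - x = -(2 : ℂ) • (x - K.starProjection x) := by
    rw [Submodule.reflection_apply]; module
  simp [this]

theorem rank_reflectionUnitary_orthogonal_singleton_sub_one_le (x : H) :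
    (unitaryToEnd (reflectionUnitary (ℂ ∙ x)ᗮ) - 1).rank ≤ 1 := by
  refine (rank_reflectionUnitary_sub_one_le _).trans ?_
  rw [Submodule.orthogonal_orthogonal]
  exact (rank_span_le _).trans (by simp)

theorem reflectionUnitary_orthogonal_singleton_notMem_center {x y : H} (hx : x ≠ 0) (hy : y ≠ 0)
    (hxy : inner ℂ x y = 0) : reflectionUnitary (ℂ ∙ x)ᗮ ∉ Subgroup.center U(H) :=
  notMem_center_of_eigenvectors (α := -1) (β := 1) (by norm_num) hx hy
    (by simp [Submodule.reflection_orthogonalComplement_singleton_eq_neg])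
    (by simpa using Submodule.reflection_mem_subspace_eq_self
          (Submodule.mem_orthogonal_singleton_iff_inner_right.mpr hxy))

theorem reflectionUnitary_orthogonal_span_image_notMem_scalarAddRankLE {ι : Type*} {f : ι → H}
    (hf : Orthonormal ℂ f) {T : Set ι} (hT : T.Infinite) (hTc : Tᶜ.Infinite) (n : ℕ) :
    reflectionUnitary (Submodule.span ℂ (f '' T))ᗮ ∉ scalarAddRankLE n := by
  have hinj {S : Set ι} (hS : S.Infinite) :
      Function.Injective fun i : Fin (n + 1) => (hS.natEmbedding _ i : ι) :=
    Subtype.val_injective.comp ((hS.natEmbedding _).injective.comp Fin.val_injective)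
  refine notMem_scalarAddRankLE_of_eigenvectors (α := 1) (β := -1) (by norm_num)
    (hf.linearIndependent.comp _ (hinj hTc)) (hf.linearIndependent.comp _ (hinj hT)) ?_ ?_
  · intro i
    simpa using Submodule.reflection_mem_subspace_eq_self
      (hf.mem_orthogonal_span_image (hTc.natEmbedding _ i).2)
  · intro i
    simpa using Submodule.reflection_mem_subspace_orthogonalComplement_eq_neg
      (Submodule.le_orthogonal_orthogonal _
        (Submodule.subset_span (Set.mem_image_of_mem f (hT.natEmbedding _ i).2)))

theorem closure_pmConj_pow_subset_image_scalarAddRankLE {u : U(H)}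
    (hu : (unitaryToEnd u - 1).rank ≤ 1) (n : ℕ) :
    closure (pmConj (u : PU(H)) ^ n) ⊆ QuotientGroup.mk '' scalarAddRankLE n :=
  closure_minimal ((pmConj_pow_subset_image _ (QuotientGroup.mk'_surjective _) u n).trans
    (Set.image_mono (pmConj_pow_subset_scalarAddRankLE hu n)))
    (isClosed_image_mk_scalarAddRankLE n)

theorem mk_mem_image_scalarAddRankLE_iff {n : ℕ} {w : U(H)} :
    (w : PU(H)) ∈ QuotientGroup.mk '' scalarAddRankLE n ↔ w ∈ scalarAddRankLE n := by
  rw [← Set.mem_preimage, preimage_image_mk_scalarAddRankLE]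

end UnitaryGroup

theorem stmt_6_general {H : Type*} [NormedAddCommGroup H] [InnerProductSpace ℂ H]
    [CompleteSpace H]
    (hinf : ¬ FiniteDimensional ℂ H) :
    letI : TopologicalSpace (unitary (H →L[ℂ] H)) :=
      TopologicalSpace.induced
        (fun u : unitary (H →L[ℂ] H) => ((u : H →L[ℂ] H) : H → H)) Pi.topologicalSpace
    ∃ g : unitary (H →L[ℂ] H) ⧸ Subgroup.center (unitary (H →L[ℂ] H)), g ≠ 1 ∧
      ∀ n : ℕ, 1 ≤ n → closure (pmConj g ^ n) ≠
        (Set.univ : Set (unitary (H →L[ℂ] H) ⧸ Subgroup.center (unitary (H →L[ℂ] H)))) := by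
  let _ := unitaryStrongTopology (H := H)
  obtain ⟨f, hf⟩ := exists_orthonormal_nat hinf
  have hodd : {k | Odd k}.Infinite := Set.infinite_of_injective_forall_mem
    (fun a b h => by simpa using h : Function.Injective (2 * · + 1)) (by simp)
  have heven : {k | Odd k}ᶜ.Infinite := Set.infinite_of_injective_forall_mem
    (fun a b h => by simpa using h : Function.Injective (2 * ·)) (by simp)
  refine ⟨reflectionUnitary (ℂ ∙ f 0)ᗮ, ?_, fun n _ hdense => ?_⟩
  · rw [Ne, QuotientGroup.eq_one_iff]
    exact reflectionUnitary_orthogonal_singleton_notMem_center (hf.ne_zero 0) (hf.ne_zero 1)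
      (hf.inner_eq_zero zero_ne_one)
  · have hv := closure_pmConj_pow_subset_image_scalarAddRankLE
      (rank_reflectionUnitary_orthogonal_singleton_sub_one_le (f 0)) n
      (hdense ▸ Set.mem_univ (reflectionUnitary (Submodule.span ℂ (f '' {k | Odd k}))ᗮ :
        unitary (H →L[ℂ] H) ⧸ Subgroup.center (unitary (H →L[ℂ] H))))
    exact reflectionUnitary_orthogonal_span_image_notMem_scalarAddRankLE hf hodd heven n
      (mk_mem_image_scalarAddRankLE_iff.mp hv)

/-- The projective unitary group of an infinite-dimensional separable complex Hilbert space,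
i.e. the quotient of the unitary group (with the strong operator topology) by its center,
with the quotient topology, fails topological bounded normal generation. -/
theorem stmt_6 {H : Type*} [NormedAddCommGroup H] [InnerProductSpace ℂ H]
    [CompleteSpace H] [TopologicalSpace.SeparableSpace H]
    (hinf : ¬ FiniteDimensional ℂ H) :
    letI : TopologicalSpace (unitary (H →L[ℂ] H)) :=
      TopologicalSpace.induced
        (fun u : unitary (H →L[ℂ] H) => ((u : H →L[ℂ] H) : H → H)) Pi.topologicalSpace
    ∃ g : unitary (H →L[ℂ] H) ⧸ Subgroup.center (unitary (H →L[ℂ] H)), g ≠ 1 ∧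
      ∀ n : ℕ, 1 ≤ n → closure (pmConj g ^ n) ≠
        (Set.univ : Set (unitary (H →L[ℂ] H) ⧸ Subgroup.center (unitary (H →L[ℂ] H)))) :=
  stmt_6_general hinf
end

section
/- For a compact Hausdorff topological group G, topological bounded normal generation is equivalent to strong topological bounded normal generation: (for every non-trivial g ∈ G there is n ∈ ℕ with closure((g^{±G})^{·n}) = G) if and only if (for every non-trivial g ∈ G there is n ∈ ℕ with (closure(g^{±G}))^{·n} = G). -/
/-!
In a topological monoid `closure s ^ n ⊆ closure (s ^ n)` by continuity of multiplication. When
`closure s` is compact and the space is Hausdorff, `closure s ^ n` is compact, hence closed, so the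
two sets coincide; in a compact group this applies to `s = pmConj g`, and the two conditions are
literally the same.
-/

open Pointwise

section ClosurePow

variable {M : Type*} [Monoid M] [TopologicalSpace M] [ContinuousMul M]

lemma closure_mul_closure_subset (s t : Set M) : closure s * closure t ⊆ closure (s * t) :=
  Set.mul_subset_iff.2 fun _ hx _ hy =>
    map_mem_closure₂ continuous_mul hx hy fun _ ha _ hb => Set.mul_mem_mul ha hb

lemma closure_pow_subset (s : Set M) (n : ℕ) : closure s ^ n ⊆ closure (s ^ n) := by
  induction n with
  | zero => exact subset_closure
  | succ n ih =>
    calc closure s ^ (n + 1) = closure s ^ n * closure s := pow_succ _ _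
      _ ⊆ closure (s ^ n) * closure s := Set.mul_subset_mul_right ih
      _ ⊆ closure (s ^ n * s) := closure_mul_closure_subset _ _
      _ = closure (s ^ (n + 1)) := by rw [pow_succ]

lemma IsCompact.pow {s : Set M} (hs : IsCompact s) (n : ℕ) : IsCompact (s ^ n) := by
  induction n with
  | zero => exact isCompact_singleton
  | succ n ih => simpa only [pow_succ] using ih.mul hs

lemma closure_pow_of_isCompact_closure [T2Space M] {s : Set M} (hs : IsCompact (closure s))
    (n : ℕ) : closure s ^ n = closure (s ^ n) :=
  (closure_pow_subset s n).antisymm <|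
    closure_minimal (Set.pow_subset_pow_left subset_closure) (hs.pow n).isClosed

end ClosurePow

/-- For compact Hausdorff topological groups, topological bounded normal generation is
equivalent to strong topological bounded normal generation. -/
theorem stmt_11 {G : Type*} [Group G] [TopologicalSpace G] [IsTopologicalGroup G]
    [CompactSpace G] [T2Space G] :
    (∀ g : G, g ≠ 1 → ∃ n : ℕ, 1 ≤ n ∧ closure (pmConj g ^ n) = (Set.univ : Set G)) ↔
      (∀ g : G, g ≠ 1 → ∃ n : ℕ, 1 ≤ n ∧ (closure (pmConj g)) ^ n = (Set.univ : Set G)) := by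
  simp only [closure_pow_of_isCompact_closure isClosed_closure.isCompact]
end

section
/- Let X be a set, let n ∈ ℕ, and let r be an equivalence relation on X each of whose equivalence classes has cardinality at most n. Then the group G = {σ ∈ Sym(X) : (σ(x), x) ∈ r for all x ∈ X} of permutations of X mapping each point to an r-equivalent point is locally finite: every finitely generated subgroup of G is finite. -/
/-- The full group of an equivalence relation `r` on `X`: all permutations of `X` mapping
each point to an `r`-equivalent point. -/
def eqRelFullGroup {X : Type*} (r : Setoid X) : Subgroup (Equiv.Perm X) where
  carrier := {σ : Equiv.Perm X | ∀ x : X, r.r (σ x) x}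
  one_mem' := fun x => r.refl' x
  mul_mem' := fun {a b} ha hb x => r.trans' (ha (b x)) (hb x)
  inv_mem' := fun {a} ha x => r.symm' (by simpa using ha (a⁻¹ x))

/-!
A finitely generated group has only finitely many homomorphisms into the finite group
`Sym(n)`, each being determined by the images of the generators. When the group acts faithfully
with all orbits of size at most `n`, its action on each orbit factors through one of these
homomorphisms, so the group embeds into a finite product of copies of `Sym(n)`. A subgroup of
the full group of `r` acts faithfully on `X`, and its orbits lie inside the classes of `r`.
-/

open MulAction

instance MonoidHom.finite_of_groupFG (G P : Type*) [Group G] [Group.FG G] [Monoid P]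
    [Finite P] : Finite (G →* P) := by
  obtain ⟨S, hS⟩ := Group.fg_def.mp ‹Group.FG G›
  exact Finite.of_injective (fun f : G →* P => fun s : S => f s)
    fun f g hfg => MonoidHom.eq_of_eqOn_dense hS fun s hs => congrFun hfg ⟨s, hs⟩

theorem MulAction.exists_ker_le_stabilizer_of_orbit_encard_le {G α : Type*} [Group G]
    [MulAction G α] {n : ℕ} {a : α} (h : (orbit G a).encard ≤ n) :
    ∃ φ : G →* Equiv.Perm (Fin n), φ.ker ≤ stabilizer G a := by
  obtain ⟨hfin, hcard⟩ := Set.encard_le_coe_iff_finite_ncard_le.mp h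
  have : Finite (orbit G a) := hfin
  let ι : orbit G a ↪ Fin n :=
    (Finite.equivFin (orbit G a)).toEmbedding.trans (Fin.castLEEmb (by rwa [Nat.card_coe_set_eq]))
  refine ⟨(Equiv.Perm.viaEmbeddingHom ι).comp (toPermHom G (orbit G a)), fun g hg => ?_⟩
  have hg : toPermHom G (orbit G a) g = 1 :=
    Equiv.Perm.viaEmbeddingHom_injective ι (by simpa using hg)
  simpa [mem_stabilizer_iff] using congrArg Subtype.val (Equiv.ext_iff.mp hg ⟨a, mem_orbit_self a⟩)

theorem MulAction.finite_of_orbit_encard_le {G α : Type*} [Group G] [Group.FG G] [MulAction G α]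
    [FaithfulSMul G α] (n : ℕ) (h : ∀ a : α, (orbit G a).encard ≤ n) : Finite G := by
  choose φ hφ using fun a => exists_ker_le_stabilizer_of_orbit_encard_le (h a)
  refine Finite.of_injective (fun g (f : G →* Equiv.Perm (Fin n)) => f g) fun g g' hgg' => ?_
  refine eq_of_smul_eq_smul (α := α) fun a => ?_
  have hker : g'⁻¹ * g ∈ (φ a).ker := by
    rw [MonoidHom.mem_ker, map_mul, map_inv, show φ a g = φ a g' from congrFun hgg' (φ a),
      inv_mul_cancel]
  simpa [mem_stabilizer_iff, mul_smul, inv_smul_eq_iff] using hφ a hker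

/-- If every equivalence class of `r` has cardinality at most `n`, then the full group of `r`
is locally finite: every finitely generated subgroup of it is finite. -/
theorem stmt_13 {X : Type*} (n : ℕ) (r : Setoid X)
    (hcard : ∀ x : X, {y : X | r.r x y}.encard ≤ (n : ℕ∞)) :
    ∀ H : Subgroup (eqRelFullGroup r), H.FG → Finite H := by
  intro H hH
  have : Group.FG H := (Group.fg_iff_subgroup_fg H).mpr hH
  have horbit (x : X) : orbit H x ⊆ {y | r.r x y} := by
    rintro _ ⟨h, rfl⟩
    exact r.symm' (h.1.2 x)
  exact finite_of_orbit_encard_le n fun x => (Set.encard_le_encard (horbit x)).trans (hcard x)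
end

section
/- There exists a Polish group G (a topological group whose topology is separable and completely metrizable) which has topological bounded normal generation but is not simple, i.e. G possesses a normal subgroup different from both the trivial subgroup and G. In particular, topological bounded normal generation does not imply bounded normal generation. -/
open Pointwise

/-!
The example is `Aut(ℚ, <)` with the topology of pointwise convergence, realised as a closed
subset of `(ℕ → ℕ)²` through `g ↦ (g, g⁻¹)` after enumerating `ℚ`, hence Polish.

If `k ∈ {g, g⁻¹}` moves some `q` up, then any finite partial map of `σ` is matched by
`(h₂ k⁻¹ h₂⁻¹)(h₁ k h₁⁻¹)`: place a copy `u` of the finite domain `F` inside `(q, k q)`, so that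
`u < k ∘ u`, and let `h₁` send `u ↦ id`, `k ∘ u ↦ t` and `h₂` send `u ↦ σ`, `k ∘ u ↦ t`, where
`t` lies above `F ∪ σ F`; such `h₁, h₂` exist by the back-and-forth argument. So `(g^{±G})²` is
dense. The automorphisms fixing a neighbourhood of `+∞` form a proper nontrivial normal subgroup.
-/

open Set Topology Filter

namespace Order

variable {α β : Type*} [LinearOrder α] [LinearOrder β]
  [Countable α] [DenselyOrdered α] [NoMinOrder α] [NoMaxOrder α] [Nonempty α]
  [Countable β] [DenselyOrdered β] [NoMinOrder β] [NoMaxOrder β] [Nonempty β]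

/-- Back-and-forth, started from `f` instead of the empty partial isomorphism. -/
theorem PartialIso.exists_orderIso_extends (f : PartialIso α β) :
    ∃ g : α ≃o β, ∀ p ∈ f.val, g p.1 = p.2 := by
  cases nonempty_encodable α
  cases nonempty_encodable β
  let cofinals : α ⊕ β → Cofinal (PartialIso α β) :=
    Sum.elim (PartialIso.definedAtLeft β) (PartialIso.definedAtRight α)
  let I := idealOfCofinals f cofinals
  let F a := PartialIso.funOfIdeal a I (cofinal_meets_idealOfCofinals _ cofinals (.inl a))
  let G b := PartialIso.invOfIdeal b I (cofinal_meets_idealOfCofinals _ cofinals (.inr b))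
  refine ⟨OrderIso.ofCmpEqCmp (fun a ↦ (F a).val) (fun b ↦ (G b).val) fun a b ↦ ?_, ?_⟩
  · obtain ⟨f, hf, ha⟩ := (F a).prop
    obtain ⟨g, hg, hb⟩ := (G b).prop
    obtain ⟨m, -, fm, gm⟩ := I.directed _ hf _ hg
    exact m.prop (a, _) (fm ha) (_, b) (gm hb)
  · intro p hp
    obtain ⟨f', hf', hp'⟩ := (F p.1).prop
    obtain ⟨m, -, fm, f'm⟩ := I.directed _ (mem_idealOfCofinals f cofinals) _ hf'
    have := m.prop _ (f'm hp') _ (fm hp)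
    rw [cmp_self_eq_eq, eq_comm, cmp_eq_eq_iff] at this
    exact this

theorem exists_orderIso_apply_eq {ι : Type*} [LinearOrder ι] [Fintype ι] {a : ι → α} {b : ι → β}
    (ha : StrictMono a) (hb : StrictMono b) : ∃ g : α ≃o β, ∀ i, g (a i) = b i := by
  classical
  let f : PartialIso α β := ⟨Finset.univ.image fun i ↦ (a i, b i), by
    simp only [Finset.mem_image, Finset.mem_univ, true_and]
    rintro _ ⟨i, rfl⟩ _ ⟨j, rfl⟩
    rw [ha.cmp_map_eq, hb.cmp_map_eq]⟩
  obtain ⟨g, hg⟩ := f.exists_orderIso_extends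
  exact ⟨g, fun i ↦ hg (a i, b i) (Finset.mem_image_of_mem _ (Finset.mem_univ i))⟩

end Order

theorem StrictMono.sumLexElim {ι κ γ : Type*} [Preorder ι] [Preorder κ] [Preorder γ]
    {f : ι → γ} {g : κ → γ} (hf : StrictMono f) (hg : StrictMono g) (hfg : ∀ i j, f i < g j) :
    StrictMono fun p : ι ⊕ₗ κ ↦ Sum.elim f g (ofLex p) := by
  rintro (i | i) (j | j) h
  · exact hf (Sum.Lex.inl_lt_inl_iff.1 h)
  · exact hfg i j
  · exact absurd h Sum.Lex.not_inr_lt_inl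
  · exact hg (Sum.Lex.inr_lt_inr_iff.1 h)

theorem exists_strictMono_mem_Ioo {α ι : Type*} [LinearOrder α] [DenselyOrdered α]
    [LinearOrder ι] [Countable ι] {a b : α} (hab : a < b) :
    ∃ u : ι → α, StrictMono u ∧ ∀ i, u i ∈ Ioo a b := by
  have : Nontrivial (Ioo a b) := (Set.Ioo_infinite hab).nontrivial.coe_sort
  obtain ⟨u⟩ := Order.embedding_from_countable_to_dense ι (Ioo a b)
  exact ⟨fun i ↦ u i, fun i j h ↦ u.strictMono h, fun i ↦ (u i).2⟩

section pmConj

variable {G : Type*} [Group G]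

theorem conj_mem_pmConj (g h : G) : h * g * h⁻¹ ∈ pmConj g := Or.inl ⟨h, rfl⟩

theorem conj_inv_mem_pmConj (g h : G) : h * g⁻¹ * h⁻¹ ∈ pmConj g := Or.inr ⟨h, rfl⟩

theorem pmConj_inv (g : G) : pmConj g⁻¹ = pmConj g := by
  rw [pmConj, pmConj, inv_inv, Set.union_comm]

end pmConj

namespace OrderIso

variable {α : Type*} [LinearOrder α]

theorem exists_lt_apply_of_ne_one {g : α ≃o α} (hg : g ≠ 1) :
    ∃ k ∈ ({g, g⁻¹} : Set (α ≃o α)), ∃ q, q < k q := by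
  obtain ⟨q, hq⟩ : ∃ q, g q ≠ q := by
    by_contra! h
    exact hg (RelIso.ext h)
  rcases hq.lt_or_gt with hlt | hlt
  · exact ⟨g⁻¹, Or.inr rfl, g q, by rwa [RelIso.inv_apply_self]⟩
  · exact ⟨g, Or.inl rfl, q, hlt⟩

variable [Countable α] [DenselyOrdered α] [NoMinOrder α] [NoMaxOrder α] [Nonempty α]

theorem exists_mem_pmConj_mul_pmConj_eqOn {k : α ≃o α} {q : α} (hq : q < k q) (σ : α ≃o α)
    (F : Finset α) : ∃ s ∈ pmConj k * pmConj k, ∀ x ∈ F, s x = σ x := by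
  obtain ⟨u, hu, hu_mem⟩ := exists_strictMono_mem_Ioo (ι := F) hq
  obtain ⟨M, hM⟩ : ∃ M, ∀ x ∈ F, x < M ∧ σ x < M := by
    obtain ⟨M, hM⟩ := (F ∪ F.image σ).bddAbove
    obtain ⟨M', hM'⟩ := exists_gt M
    exact ⟨M', fun x hx ↦ ⟨(hM (Finset.mem_union_left _ hx)).trans_lt hM',
      (hM (Finset.mem_union_right _ (Finset.mem_image_of_mem σ hx))).trans_lt hM'⟩⟩
  obtain ⟨M', hM'⟩ := exists_gt M
  obtain ⟨t, ht, ht_mem⟩ := exists_strictMono_mem_Ioo (ι := F) hM'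
  have hu_lt_ku (i j : F) : u i < k (u j) :=
    (hu_mem i).2.trans (k.strictMono (hu_mem j).1)
  have hF_lt_t (i j : F) : (i : α) < t j := (hM i i.2).1.trans (ht_mem j).1
  have hσF_lt_t (i j : F) : σ i < t j := (hM i i.2).2.trans (ht_mem j).1
  have hsrc := hu.sumLexElim (k.strictMono.comp hu) hu_lt_ku
  obtain ⟨h₁, hh₁⟩ := Order.exists_orderIso_apply_eq hsrc
    ((Subtype.strictMono_coe _).sumLexElim ht hF_lt_t)
  obtain ⟨h₂, hh₂⟩ := Order.exists_orderIso_apply_eq hsrc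
    ((σ.strictMono.comp (Subtype.strictMono_coe _)).sumLexElim ht hσF_lt_t)
  refine ⟨(h₂ * k⁻¹ * h₂⁻¹) * (h₁ * k * h₁⁻¹),
    Set.mul_mem_mul (conj_inv_mem_pmConj k h₂) (conj_mem_pmConj k h₁), fun x hx ↦ ?_⟩
  have h₁u := hh₁ (toLex (.inl ⟨x, hx⟩))
  have h₁ku := hh₁ (toLex (.inr ⟨x, hx⟩))
  have h₂u := hh₂ (toLex (.inl ⟨x, hx⟩))
  have h₂ku := hh₂ (toLex (.inr ⟨x, hx⟩))
  simp only [ofLex_toLex, Sum.elim_inl, Sum.elim_inr, Function.comp_apply] at h₁u h₁ku h₂u h₂ku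
  simp only [RelIso.mul_apply]
  conv_lhs => rw [← h₁u]
  rw [RelIso.inv_apply_self, h₁ku, ← h₂ku, RelIso.inv_apply_self, RelIso.inv_apply_self, h₂u]

end OrderIso

theorem continuous_comp_of_discreteTopology {X Y Z : Type*} [TopologicalSpace Y]
    [DiscreteTopology Y] [TopologicalSpace Z] :
    Continuous fun p : (Y → Z) × (X → Y) ↦ p.1 ∘ p.2 := by
  have heval : Continuous fun q : (Y → Z) × Y ↦ q.1 q.2 := by
    refine continuous_iff_continuousAt.2 fun ⟨f, y⟩ ↦ ?_
    refine ((continuous_apply y).comp continuous_fst).continuousAt.congr ?_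
    filter_upwards [continuous_snd.continuousAt.preimage_mem_nhds
      ((isOpen_discrete {y}).mem_nhds rfl)] with q (hq : q.2 = y)
    rw [Function.comp_apply, hq]
  exact continuous_pi fun x ↦
    heval.comp (continuous_fst.prodMk ((continuous_apply x).comp continuous_snd))

theorem exists_finset_eqOn_subset_of_mem_nhds {ι Z : Type*} [TopologicalSpace Z]
    [DiscreteTopology Z] {f : ι → Z} {V : Set (ι → Z)} (hV : V ∈ 𝓝 f) :
    ∃ I : Finset ι, {f' | ∀ i ∈ I, f' i = f i} ⊆ V := by
  obtain ⟨W, hWV, hW, hfW⟩ := mem_nhds_iff.1 hV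
  obtain ⟨I, u, hu, hIu⟩ := isOpen_pi_iff.1 hW f hfW
  exact ⟨I, fun f' hf' ↦ hWV (hIu fun i hi ↦ (hf' i hi).symm ▸ (hu i hi).2)⟩

namespace OrderIso

section Topology

open Encodable Denumerable

variable {α : Type*} [LinearOrder α] [Denumerable α]

def natCode (g : α ≃o α) : ℕ → ℕ := fun n ↦ encode (g (ofNat α n))

theorem natCode_mul (g h : α ≃o α) : natCode (g * h) = natCode g ∘ natCode h := by
  funext n
  simp [natCode, RelIso.mul_apply]

@[simp]
theorem natCode_one : natCode (1 : α ≃o α) = id := by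
  funext n
  simp [natCode]

def codePair (g : α ≃o α) : (ℕ → ℕ) × (ℕ → ℕ) := (natCode g, natCode g⁻¹)

instance : TopologicalSpace (α ≃o α) := .induced codePair inferInstance

theorem continuous_codePair : Continuous (codePair : α ≃o α → _) := continuous_induced_dom

instance : IsTopologicalGroup (α ≃o α) where
  continuous_mul := by
    refine continuous_induced_rng.2 ?_
    have hmul : codePair ∘ (fun p : (α ≃o α) × (α ≃o α) ↦ p.1 * p.2) =
        fun p ↦ ((codePair p.1).1 ∘ (codePair p.2).1, (codePair p.2).2 ∘ (codePair p.1).2) := by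
      funext p
      simp [codePair, natCode_mul]
    rw [hmul]
    have h₁ := continuous_codePair.comp (continuous_fst (X := α ≃o α) (Y := α ≃o α))
    have h₂ := continuous_codePair.comp (continuous_snd (X := α ≃o α) (Y := α ≃o α))
    exact (continuous_comp_of_discreteTopology.comp (h₁.fst.prodMk h₂.fst)).prodMk
      (continuous_comp_of_discreteTopology.comp (h₂.snd.prodMk h₁.snd))
  continuous_inv := by
    refine continuous_induced_rng.2 ?_
    have hinv : codePair ∘ (fun g : α ≃o α ↦ g⁻¹) = Prod.swap ∘ codePair := by
      funext g
      simp [codePair]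
    rw [hinv]
    exact continuous_swap.comp continuous_codePair

theorem range_codePair : Set.range (codePair : α ≃o α → _) =
    {p | p.1 ∘ p.2 = id ∧ p.2 ∘ p.1 = id ∧
      ∀ m n, ofNat α m ≤ ofNat α n → ofNat α (p.1 m) ≤ ofNat α (p.1 n)} := by
  ext ⟨f, f'⟩
  constructor
  · rintro ⟨g, hg⟩
    simp only [codePair, Prod.mk.injEq] at hg
    obtain ⟨rfl, rfl⟩ := hg
    refine ⟨?_, ?_, fun m n hmn ↦ ?_⟩
    · simp [← natCode_mul]
    · simp [← natCode_mul]
    · simpa [natCode] using g.monotone hmn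
  · rintro ⟨h₁, h₂, hmono⟩
    simp only [funext_iff, Function.comp_apply, id] at h₁ h₂ hmono
    let e : α ≃ α :=
      { toFun x := ofNat α (f (encode x))
        invFun y := ofNat α (f' (encode y))
        left_inv x := by simp [h₂]
        right_inv y := by simp [h₁] }
    have he : Monotone e := fun x y hxy ↦ by
      show ofNat α (f (encode x)) ≤ ofNat α (f (encode y))
      simpa using hmono (encode x) (encode y) (by simpa using hxy)
    refine ⟨⟨e, (he.strictMono_of_injective e.injective).le_iff_le⟩, ?_⟩
    refine Prod.ext (funext fun n ↦ ?_) (funext fun n ↦ ?_)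
    · simp [codePair, natCode, e]
    · show encode (e.symm (ofNat α n)) = f' n
      simp [e]

theorem isClosedEmbedding_codePair : IsClosedEmbedding (codePair : α ≃o α → _) := by
  refine ⟨⟨⟨rfl⟩, fun g h hgh ↦ RelIso.ext fun x ↦ ?_⟩, ?_⟩
  · simpa [codePair, natCode] using congrFun (congrArg Prod.fst hgh) (encode x)
  · have hcomp : Continuous fun p : (ℕ → ℕ) × (ℕ → ℕ) ↦ p.1 ∘ p.2 :=
      continuous_comp_of_discreteTopology
    have hcomp' : Continuous fun p : (ℕ → ℕ) × (ℕ → ℕ) ↦ p.2 ∘ p.1 :=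
      continuous_comp_of_discreteTopology.comp continuous_swap
    simp only [range_codePair, Set.ofPred_and, Set.ofPred_forall]
    refine (isClosed_eq hcomp continuous_const).inter ((isClosed_eq hcomp' continuous_const).inter
      (isClosed_iInter fun m ↦ isClosed_iInter fun n ↦ isClosed_iInter fun _ ↦ ?_))
    exact (isClosed_discrete {q : ℕ × ℕ | ofNat α q.1 ≤ ofNat α q.2}).preimage
      (f := fun p : (ℕ → ℕ) × (ℕ → ℕ) ↦ (p.1 m, p.1 n)) (by fun_prop)

instance : PolishSpace (α ≃o α) := isClosedEmbedding_codePair.polishSpace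

theorem mem_closure_of_forall_finset_exists_eqOn {S : Set (α ≃o α)} {σ : α ≃o α}
    (h : ∀ F : Finset α, ∃ s ∈ S, ∀ x ∈ F, s x = σ x) : σ ∈ closure S := by
  classical
  refine mem_closure_iff_nhds.2 fun U hU ↦ ?_
  obtain ⟨V, hV, hVU⟩ := (nhds_induced codePair σ ▸ hU : U ∈ (𝓝 (codePair σ)).comap codePair)
  obtain ⟨V₁, hV₁, V₂, hV₂, hV₁₂⟩ := mem_nhds_prod_iff.1 hV
  obtain ⟨I₁, hI₁⟩ := exists_finset_eqOn_subset_of_mem_nhds hV₁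
  obtain ⟨I₂, hI₂⟩ := exists_finset_eqOn_subset_of_mem_nhds hV₂
  obtain ⟨s, hs, hsσ⟩ := h (I₁.image (ofNat α) ∪ I₂.image fun n ↦ σ⁻¹ (ofNat α n))
  refine ⟨s, hVU (hV₁₂ ⟨hI₁ fun n hn ↦ ?_, hI₂ fun n hn ↦ ?_⟩), hs⟩
  · simp [codePair, natCode, hsσ _ (Finset.mem_union_left _ (Finset.mem_image_of_mem _ hn))]
  · have := hsσ _ (Finset.mem_union_right _ (Finset.mem_image_of_mem _ hn))
    rw [RelIso.apply_inv_self] at this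
    show encode (s⁻¹ (ofNat α n)) = encode (σ⁻¹ (ofNat α n))
    rw [← s.inv_apply_self (σ⁻¹ (ofNat α n)), this]

theorem closure_pmConj_sq_eq_univ [DenselyOrdered α] [NoMinOrder α] [NoMaxOrder α]
    {g : α ≃o α} (hg : g ≠ 1) : closure (pmConj g ^ 2) = univ := by
  obtain ⟨k, hk, q, hq⟩ := exists_lt_apply_of_ne_one hg
  have hk : pmConj k = pmConj g := by
    rcases hk with rfl | rfl
    · rfl
    · exact pmConj_inv g
  rw [sq, ← hk]
  exact Set.eq_univ_of_forall fun σ ↦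
    mem_closure_of_forall_finset_exists_eqOn (exists_mem_pmConj_mul_pmConj_eqOn hq σ)

end Topology

variable (α : Type*) [Preorder α]

def eventuallyFixed : Subgroup (α ≃o α) where
  carrier := {g | ∀ᶠ x in atTop, g x = x}
  one_mem' := .of_forall fun _ ↦ rfl
  mul_mem' {g h} hg hh := by
    filter_upwards [hg, hh] with x hgx hhx
    rw [RelIso.mul_apply, hhx, hgx]
  inv_mem' {g} hg := by
    filter_upwards [hg] with x hx
    rw [← hx, RelIso.inv_apply_self, hx]

theorem eventuallyFixed_normal : (eventuallyFixed α).Normal where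
  conj_mem g hg h := by
    filter_upwards [h⁻¹.tendsto_atTop.eventually hg] with x hx
    rw [RelIso.mul_apply, RelIso.mul_apply, hx, RelIso.apply_inv_self]

end OrderIso

open OrderIso

theorem rat_eventuallyFixed_ne_bot : eventuallyFixed ℚ ≠ ⊥ := by
  let g : ℚ ≃o ℚ := StrictMono.orderIsoOfSurjective (fun x ↦ min x (2 * x))
    (fun x y h ↦ by simp only; grind)
    (fun y ↦ ⟨max y (y / 2), by simp only; grind⟩)
  have hg_apply (x : ℚ) : g x = min x (2 * x) := rfl
  have hg : g ∈ eventuallyFixed ℚ :=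
    eventually_atTop.2 ⟨0, fun x hx ↦ by rw [hg_apply, min_eq_left (by linarith)]⟩
  refine fun h ↦ ?_
  rw [h, Subgroup.mem_bot] at hg
  have := hg_apply (-1)
  rw [hg] at this
  norm_num at this

theorem rat_eventuallyFixed_ne_top : eventuallyFixed ℚ ≠ ⊤ := by
  refine fun h ↦ ?_
  have := (h ▸ Subgroup.mem_top (OrderIso.addRight (1 : ℚ)) : _ ∈ eventuallyFixed ℚ)
  obtain ⟨x, hx⟩ := this.exists
  simp at hx

/-- There exists a Polish group with topological bounded normal generation which is not
simple (in particular, TBNG does not imply BNG). -/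
theorem stmt_14 :
    ∃ (G : Type) (_ : Group G) (_ : TopologicalSpace G),
      IsTopologicalGroup G ∧ PolishSpace G ∧
      (∀ g : G, g ≠ 1 → ∃ n : ℕ, 1 ≤ n ∧ closure (pmConj g ^ n) = (Set.univ : Set G)) ∧
      (∃ N : Subgroup G, N.Normal ∧ N ≠ ⊥ ∧ N ≠ ⊤) :=
  ⟨ℚ ≃o ℚ, inferInstance, inferInstance, inferInstance, inferInstance,
    fun _ hg ↦ ⟨2, one_le_two, closure_pmConj_sq_eq_univ hg⟩,
    eventuallyFixed ℚ, eventuallyFixed_normal ℚ, rat_eventuallyFixed_ne_bot,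
    rat_eventuallyFixed_ne_top⟩
end
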